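/- With g_N^m defined by the alternating-sum (cumulant) formula g_N^m(Z_m) = Σ_{k=1}^m (-1)^{m-k} Σ_{σ ∈ 𝔖_m^k} (f_N^{(k)}/M_β^{⊗k})(Z_σ), and assuming ∫ f_N dZ_N = 0, each cumulant is mean-free in every variable: for each 1 ≤ ℓ ≤ m, ∫ g_N^m(Z_m) M_β(v_ℓ) dz_ℓ = 0. -/

import Mathlib

open MeasureTheory

noncomputable section

/-- The one-particle phase space `D = 𝕋² × ℝ²`. -/
abbrev Dom : Type := (AddCircle (1 : ℝ) × AddCircle (1 : ℝ)) × EuclideanSpace ℝ (Fin 2)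

/-- The Maxwellian `M_β(v) = (β/2π) exp(-β|v|²/2)`. -/
def Mβ (β : ℝ) (v : EuclideanSpace ℝ (Fin 2)) : ℝ :=
  (β / (2 * Real.pi)) * Real.exp (-β * ‖v‖ ^ 2 / 2)

/-- The product Maxwellian `M_β^{⊗n}`. -/
def Mprod (β : ℝ) {n : ℕ} (Z : Fin n → Dom) : ℝ := ∏ i, Mβ β (Z i).2

/-- Symmetry under permutation of the particles. -/
def IsSymmFn {n : ℕ} (f : (Fin n → Dom) → ℝ) : Prop :=
  ∀ (π : Equiv.Perm (Fin n)) (Z : Fin n → Dom), f (Z ∘ π) = f Z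

/-- The `s`-th marginal `f_N^{(s)}(Z_s) = ∫ f_N(Z_s, z_{s+1}, …, z_N) dz_{s+1} … dz_N`
(defined to be `0` for `s > N`). -/
def marg (N : ℕ) (f : (Fin N → Dom) → ℝ) (s : ℕ) (Zs : Fin s → Dom) : ℝ :=
  if h : s ≤ N then
    ∫ W : Fin (N - s) → Dom, f (fun i => Fin.append Zs W (Fin.cast (by omega) i))
  else 0

/-- For `σ ⊆ {1,…,s}`, the restricted configuration `Z_σ` (listed in increasing order). -/
def restrictF {s : ℕ} (Zs : Fin s → Dom) (σ : Finset (Fin s)) : Fin σ.card → Dom :=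
  fun j => Zs ((σ.orderIsoOfFin rfl j : Fin s))

/-- The cumulant `g_N^m(Z_m) := Σ_{k=1}^m (-1)^{m-k} Σ_{σ ∈ 𝔖_m^k} (f_N^{(k)}/M_β^{⊗k})(Z_σ)`. -/
def cumul (β : ℝ) (N : ℕ) (f : (Fin N → Dom) → ℝ) (m : ℕ) (Zm : Fin m → Dom) : ℝ :=
  ∑ σ ∈ Finset.univ.powerset.filter (fun σ : Finset (Fin m) => σ.Nonempty),
    (-1 : ℝ) ^ (m - σ.card) *
      (marg N f σ.card (restrictF Zm σ) / Mprod β (restrictF Zm σ))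

/-!
Write `R_σ` (`relMarg`) for `(f_N^{(|σ|)} / M_β^{⊗|σ|})(Z_σ)` and pair each `τ ∌ ℓ` with `τ ∪ {ℓ}`.
Integrating `z_ℓ` against `M_β` leaves `R_τ` unchanged (it does not see `z_ℓ`, and `∫ M_β = 1`)
and turns `R_{τ ∪ {ℓ}}` into `R_τ`: the factor `M_β(v_ℓ)` cancels the Maxwellian weight of `z_ℓ`,
symmetry of `f_N` moves `z_ℓ` to the last slot, and Fubini integrates it out of the marginal.
The two terms of a pair carry opposite signs, and the unpaired term `σ = ∅` vanishes because
`f_N^{(0)} = ∫ f_N = 0`.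
-/

section PiFin

variable {α : Type*} [MeasurableSpace α] {s n n' N : ℕ}

def finSumFinSubEquiv (hs : s ≤ N) : Fin s ⊕ Fin (N - s) ≃ Fin N :=
  finSumFinEquiv.trans (finCongr (by omega))

variable (α) in
def appendEquiv (hs : s ≤ N) : ((Fin s → α) × (Fin (N - s) → α)) ≃ᵐ (Fin N → α) :=
  (MeasurableEquiv.sumPiEquivProdPi fun _ => α).symm.trans
    (MeasurableEquiv.piCongrLeft (fun _ => α) (finSumFinSubEquiv hs))

lemma appendEquiv_apply (hs : s ≤ N) (Y : Fin s → α) (W : Fin (N - s) → α) :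
    appendEquiv α hs (Y, W) = Sum.elim Y W ∘ (finSumFinSubEquiv hs).symm := by
  have : (MeasurableEquiv.sumPiEquivProdPi fun _ => α).symm (Y, W) = Sum.elim Y W := by
    funext j; cases j <;> rfl
  funext i
  simp [appendEquiv, this, MeasurableEquiv.coe_piCongrLeft, Equiv.piCongrLeft_apply_eq_cast]

lemma appendEquiv_apply_eq_append (hs : s ≤ N) (Y : Fin s → α) (W : Fin (N - s) → α) :
    appendEquiv α hs (Y, W) = fun i => Fin.append Y W (Fin.cast (by omega) i) := by
  rw [appendEquiv_apply, ← Fin.append_comp_sumElim]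
  funext i
  exact congrArg (Fin.append Y W) (finSumFinEquiv.apply_symm_apply _)

lemma measurePreserving_appendEquiv (μ : Measure α) [SigmaFinite μ] (hs : s ≤ N) :
    MeasurePreserving (appendEquiv α hs)
      ((Measure.pi fun _ => μ).prod (Measure.pi fun _ => μ)) (Measure.pi fun _ => μ) :=
  (measurePreserving_piCongrLeft (fun _ => μ) _).comp
    (measurePreserving_sumPiEquivProdPi_symm fun _ => μ)

variable (α) in
def consEquiv (h : n + 1 = n') : (α × (Fin n → α)) ≃ᵐ (Fin n' → α) :=
  (MeasurableEquiv.piFinSuccAbove (fun _ => α) 0).symm.trans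
    (MeasurableEquiv.piCongrLeft (fun _ => α) (finCongr h))

lemma consEquiv_apply (h : n + 1 = n') (z : α) (W : Fin n → α) :
    consEquiv α h (z, W) = Fin.cons z W ∘ Fin.cast h.symm := by
  funext i
  simp [consEquiv, MeasurableEquiv.coe_piCongrLeft, Equiv.piCongrLeft_apply_eq_cast,
    MeasurableEquiv.piFinSuccAbove_symm_apply]

lemma measurePreserving_consEquiv (μ : Measure α) [SigmaFinite μ] (h : n + 1 = n') :
    MeasurePreserving (consEquiv α h) (μ.prod (Measure.pi fun _ => μ)) (Measure.pi fun _ => μ) :=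
  (measurePreserving_piCongrLeft (fun _ => μ) (finCongr h)).comp
    (measurePreserving_piFinSuccAbove (fun _ => μ) 0).symm

lemma appendEquiv_consEquiv {k : ℕ} (hk : k + 1 ≤ N) (Y : Fin k → α) (z : α)
    (W : Fin (N - (k + 1)) → α) :
    appendEquiv α (Nat.le_of_succ_le hk) (Y, consEquiv α (by omega) (z, W)) =
      appendEquiv α hk (Fin.snoc Y z, W) := by
  funext i
  simp [appendEquiv_apply_eq_append, consEquiv_apply, Fin.append_left_snoc]

theorem quasiMeasurePreserving_comp_of_injective {ι κ : Type*} [Fintype ι] [Fintype κ]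
    (μ : Measure α) [SigmaFinite μ] {g : ι → κ} (hg : g.Injective) :
    Measure.QuasiMeasurePreserving (fun x : κ → α => x ∘ g)
      (Measure.pi fun _ => μ) (Measure.pi fun _ => μ) := by
  classical
  let _ : Fintype (Set.range g) := Subtype.fintype _
  have hsplit := measurePreserving_piEquivPiSubtypeProd (fun _ : κ => μ) (· ∈ Set.range g)
  have hreindex := measurePreserving_piCongrLeft (fun _ : Set.range g => μ) (Equiv.ofInjective g hg)
  have : (fun x : κ → α => x ∘ g) =
      (MeasurableEquiv.piCongrLeft (fun _ => α) (Equiv.ofInjective g hg)).symm ∘ Prod.fst ∘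
        MeasurableEquiv.piEquivPiSubtypeProd (fun _ => α) (· ∈ Set.range g) := by
    funext x j
    simp [MeasurableEquiv.piCongrLeft, Equiv.piCongrLeft_symm_apply]
  rw [this]
  exact hreindex.symm.quasiMeasurePreserving.comp
    (Measure.quasiMeasurePreserving_fst.comp hsplit.quasiMeasurePreserving)

end PiFin

-- Not found by instance search when `Dom` is the factor of a pi type.
instance : SigmaFinite (volume : Measure Dom) := inferInstance

lemma Mβ_pos {β : ℝ} (hβ : 0 < β) (v : EuclideanSpace ℝ (Fin 2)) : 0 < Mβ β v :=
  mul_pos (div_pos hβ (by positivity)) (Real.exp_pos _)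

lemma integral_Mβ {β : ℝ} (hβ : 0 < β) : ∫ v, Mβ β v = 1 := by
  have hexp : ∀ v : EuclideanSpace ℝ (Fin 2), -β * ‖v‖ ^ 2 / 2 = -(β / 2) * ‖v‖ ^ 2 :=
    fun v => by ring
  simp_rw [Mβ, hexp]
  rw [integral_const_mul, GaussianFourier.integral_rexp_neg_mul_sq_norm (half_pos hβ),
    finrank_euclideanSpace_fin, Nat.cast_ofNat, div_self two_ne_zero, Real.rpow_one]
  field_simp

lemma integral_Mβ_snd {β : ℝ} (hβ : 0 < β) : ∫ z : Dom, Mβ β z.2 = 1 := by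
  rw [Measure.volume_eq_prod, integral_fun_snd, integral_Mβ hβ]
  simp [Measure.real, Measure.volume_eq_prod, ← Set.univ_prod_univ, Measure.prod_prod,
    AddCircle.measure_univ]

lemma integrable_Mβ_snd {β : ℝ} (hβ : 0 < β) : Integrable fun z : Dom => Mβ β z.2 :=
  .of_integral_ne_zero (by rw [integral_Mβ_snd hβ]; exact one_ne_zero)

section Marginal

variable {N : ℕ} {f : (Fin N → Dom) → ℝ}

lemma marg_eq_integral {s : ℕ} (hs : s ≤ N) (Y : Fin s → Dom) :
    marg N f s Y = ∫ W, f (appendEquiv Dom hs (Y, W)) := by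
  simp only [marg, dif_pos hs, appendEquiv_apply_eq_append]

lemma measurePreserving_appendEquiv_volume {s : ℕ} (hs : s ≤ N) :
    MeasurePreserving (appendEquiv Dom hs) (volume.prod volume) volume :=
  measurePreserving_appendEquiv _ _

lemma integrable_comp_appendEquiv (hf : Integrable f) {s : ℕ} (hs : s ≤ N) :
    Integrable (fun p => f (appendEquiv Dom hs p)) (volume.prod volume) :=
  (measurePreserving_appendEquiv_volume hs).integrable_comp_emb
    (appendEquiv Dom hs).measurableEmbedding |>.2 hf

lemma marg_zero (hf : Integrable f) (Y : Fin 0 → Dom) : marg N f 0 Y = ∫ Z, f Z := by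
  rw [← (measurePreserving_appendEquiv_volume (Nat.zero_le N)).integral_comp' f,
    integral_prod _ (integrable_comp_appendEquiv hf _), integral_unique,
    marg_eq_integral (Nat.zero_le N)]
  have : (volume : Measure (Fin 0 → Dom)).real Set.univ = 1 := by simp [Measure.real, volume_pi]
  rw [this, one_smul]
  congr!

lemma marg_comp_perm (hsym : IsSymmFn f) {k : ℕ} (π : Equiv.Perm (Fin k)) (Y : Fin k → Dom) :
    marg N f k (Y ∘ π) = marg N f k Y := by
  by_cases hk : k ≤ N
  · have hE : ∀ W, appendEquiv Dom hk (Y ∘ π, W) = appendEquiv Dom hk (Y, W) ∘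
        ((finSumFinSubEquiv hk).symm.trans
          ((Equiv.sumCongr π (Equiv.refl _)).trans (finSumFinSubEquiv hk))) := by
      intro W
      rw [appendEquiv_apply, appendEquiv_apply]
      funext i
      rcases h : (finSumFinSubEquiv hk).symm i with j | j <;> simp [h]
    simp only [marg_eq_integral hk, hE]
    congr 1
    funext W
    exact hsym _ _
  · simp only [marg, dif_neg hk]

lemma marg_comp_equiv (hsym : IsSymmFn f) {k k' : ℕ} (e : Fin k ≃ Fin k') (Y : Fin k' → Dom) :
    marg N f k (Y ∘ e) = marg N f k' Y := by
  obtain rfl : k = k' := by simpa using Fintype.card_congr e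
  exact marg_comp_perm hsym e Y

lemma ae_integral_marg_snoc (hf : Integrable f) {k : ℕ} (hk : k + 1 ≤ N) :
    ∀ᵐ Y : Fin k → Dom, Integrable (fun z => marg N f (k + 1) (Fin.snoc Y z)) ∧
      ∫ z, marg N f (k + 1) (Fin.snoc Y z) = marg N f k Y := by
  have hk' : k ≤ N := Nat.le_of_succ_le hk
  have hcons : MeasurePreserving (consEquiv Dom (by omega : N - (k + 1) + 1 = N - k))
      (volume.prod volume) volume := measurePreserving_consEquiv _ _
  filter_upwards [(integrable_comp_appendEquiv hf hk').prod_right_ae] with Y hY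
  have hYcons : Integrable (fun q => f (appendEquiv Dom hk' (Y, consEquiv Dom _ q)))
      (volume.prod volume) :=
    hcons.integrable_comp_emb (consEquiv Dom _).measurableEmbedding |>.2 hY
  have hmarg : ∀ z, marg N f (k + 1) (Fin.snoc Y z) =
      ∫ W : Fin (N - (k + 1)) → Dom,
        f (appendEquiv Dom hk' (Y, consEquiv Dom (by omega) (z, W))) := by
    intro z
    simp only [marg_eq_integral hk, appendEquiv_consEquiv hk]
  simp only [hmarg]
  refine ⟨hYcons.integral_prod_left, ?_⟩
  rw [← integral_prod _ hYcons,
    hcons.integral_comp' (g := fun W => f (appendEquiv Dom hk' (Y, W))), marg_eq_integral hk']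

end Marginal

section Restrict

variable {m : ℕ}

lemma restrictF_eq_comp (Zm : Fin m → Dom) (σ : Finset (Fin m)) :
    restrictF Zm σ = Zm ∘ σ.orderEmbOfFin rfl := by
  funext j
  simp [restrictF]

lemma quasiMeasurePreserving_restrictF (σ : Finset (Fin m)) :
    Measure.QuasiMeasurePreserving (fun Zm : Fin m → Dom => restrictF Zm σ) volume volume := by
  simp only [restrictF_eq_comp]
  exact quasiMeasurePreserving_comp_of_injective volume (σ.orderEmbOfFin rfl).injective

lemma restrictF_update_of_notMem {σ : Finset (Fin m)} {ℓ : Fin m} (hℓ : ℓ ∉ σ)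
    (Zm : Fin m → Dom) (z : Dom) : restrictF (Function.update Zm ℓ z) σ = restrictF Zm σ := by
  funext j
  simp only [restrictF_eq_comp, Function.comp_apply]
  exact Function.update_of_ne (ne_of_mem_of_not_mem (σ.orderEmbOfFin_mem rfl j) hℓ) _ _

lemma Mprod_restrictF (β : ℝ) (Zm : Fin m → Dom) (σ : Finset (Fin m)) :
    Mprod β (restrictF Zm σ) = ∏ i ∈ σ, Mβ β (Zm i).2 := by
  rw [Mprod, ← Finset.prod_coe_sort σ, ← (σ.orderIsoOfFin rfl).toEquiv.prod_comp]
  rfl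

lemma marg_restrictF {N : ℕ} {f : (Fin N → Dom) → ℝ} (hsym : IsSymmFn f) {k : ℕ}
    (Zm : Fin m → Dom) {σ : Finset (Fin m)} (e : Fin k ≃ σ) :
    marg N f σ.card (restrictF Zm σ) = marg N f k (fun j => Zm (e j)) := by
  rw [← marg_comp_equiv hsym (e.trans (σ.orderIsoOfFin rfl).symm.toEquiv)]
  congr 1
  funext j
  simp [restrictF]

def snocEquivInsert {τ : Finset (Fin m)} {ℓ : Fin m} (hℓ : ℓ ∉ τ) :
    Fin (τ.card + 1) ≃ (insert ℓ τ : Finset (Fin m)) :=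
  finSuccEquivLast.trans
    ((Equiv.optionCongr (τ.orderIsoOfFin rfl).toEquiv).trans
      (Finset.subtypeInsertEquivOption hℓ).symm)

lemma update_snocEquivInsert {τ : Finset (Fin m)} {ℓ : Fin m} (hℓ : ℓ ∉ τ)
    (Zm : Fin m → Dom) (z : Dom) :
    (fun j => Function.update Zm ℓ z (snocEquivInsert hℓ j)) = Fin.snoc (restrictF Zm τ) z := by
  funext j
  induction j using Fin.lastCases with
  | last => simp [snocEquivInsert, Finset.subtypeInsertEquivOption]
  | cast j =>
    have hj : τ.orderEmbOfFin rfl j ≠ ℓ := ne_of_mem_of_not_mem (τ.orderEmbOfFin_mem rfl j) hℓ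
    simp [snocEquivInsert, Finset.subtypeInsertEquivOption, restrictF, hj]

end Restrict

section Cumulant

variable {β : ℝ} {N : ℕ} {f : (Fin N → Dom) → ℝ} {m : ℕ}

def relMarg (β : ℝ) (N : ℕ) (f : (Fin N → Dom) → ℝ) (σ : Finset (Fin m)) (Zm : Fin m → Dom) : ℝ :=
  marg N f σ.card (restrictF Zm σ) / Mprod β (restrictF Zm σ)

lemma relMarg_empty (hf : Integrable f) (hmean : ∫ Z, f Z = 0) (Zm : Fin m → Dom) :
    relMarg β N f ∅ Zm = 0 := by
  have hmarg : marg N f (∅ : Finset (Fin m)).card (restrictF Zm ∅) = 0 :=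
    (marg_zero hf _).trans hmean
  rw [relMarg, hmarg, zero_div]

lemma cumul_eq_sum_relMarg (hf : Integrable f) (hmean : ∫ Z, f Z = 0) (Zm : Fin m → Dom) :
    cumul β N f m Zm = ∑ σ, (-1 : ℝ) ^ (m - σ.card) * relMarg β N f σ Zm := by
  rw [cumul, Finset.powerset_univ]
  refine Finset.sum_filter_of_ne fun σ _ hσ => Finset.nonempty_iff_ne_empty.2 fun h => hσ ?_
  subst h
  exact mul_eq_zero_of_right _ (relMarg_empty hf hmean Zm)

lemma cumul_eq_sum_powerset_erase (hf : Integrable f) (hmean : ∫ Z, f Z = 0) (ℓ : Fin m)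
    (Zm : Fin m → Dom) :
    cumul β N f m Zm = ∑ τ ∈ (Finset.univ.erase ℓ).powerset,
      ((-1 : ℝ) ^ (m - τ.card) * relMarg β N f τ Zm +
        (-1 : ℝ) ^ (m - (insert ℓ τ).card) * relMarg β N f (insert ℓ τ) Zm) := by
  rw [cumul_eq_sum_relMarg hf hmean, Finset.sum_add_distrib,
    ← Finset.sum_powerset_insert (Finset.notMem_erase ℓ _), Finset.insert_erase (Finset.mem_univ ℓ),
    Finset.powerset_univ]

lemma relMarg_update_of_notMem {σ : Finset (Fin m)} {ℓ : Fin m} (hℓ : ℓ ∉ σ) (Zm : Fin m → Dom)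
    (z : Dom) : relMarg β N f σ (Function.update Zm ℓ z) = relMarg β N f σ Zm := by
  simp only [relMarg, restrictF_update_of_notMem hℓ]

lemma Mβ_mul_relMarg_insert_update (hβ : 0 < β) (hsym : IsSymmFn f) {τ : Finset (Fin m)}
    {ℓ : Fin m} (hℓ : ℓ ∉ τ) (Zm : Fin m → Dom) (z : Dom) :
    Mβ β z.2 * relMarg β N f (insert ℓ τ) (Function.update Zm ℓ z) =
      marg N f (τ.card + 1) (Fin.snoc (restrictF Zm τ) z) / Mprod β (restrictF Zm τ) := by
  have hprod : ∏ i ∈ τ, Mβ β (Function.update Zm ℓ z i).2 = ∏ i ∈ τ, Mβ β (Zm i).2 :=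
    Finset.prod_congr rfl fun i hi => by rw [Function.update_of_ne (ne_of_mem_of_not_mem hi hℓ)]
  have hM := Mβ_pos hβ z.2
  rw [relMarg, marg_restrictF hsym _ (snocEquivInsert hℓ), update_snocEquivInsert,
    Mprod_restrictF, Mprod_restrictF, Finset.prod_insert hℓ, Function.update_self, hprod]
  field_simp

lemma ae_integral_Mβ_mul_relMarg_insert (hβ : 0 < β) (hsym : IsSymmFn f) (hf : Integrable f)
    {τ : Finset (Fin m)} {ℓ : Fin m} (hℓ : ℓ ∉ τ) (hτN : τ.card + 1 ≤ N) :
    ∀ᵐ Zm : Fin m → Dom,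
      Integrable (fun z => Mβ β z.2 * relMarg β N f (insert ℓ τ) (Function.update Zm ℓ z)) ∧
      ∫ z, Mβ β z.2 * relMarg β N f (insert ℓ τ) (Function.update Zm ℓ z) = relMarg β N f τ Zm := by
  filter_upwards [(quasiMeasurePreserving_restrictF τ).ae (ae_integral_marg_snoc hf hτN)]
    with Zm hZm
  simp only [Mβ_mul_relMarg_insert_update hβ hsym hℓ]
  exact ⟨hZm.1.div_const _, by rw [integral_div, hZm.2, relMarg]⟩

lemma ae_integral_Mβ_mul_relMarg_pair (hβ : 0 < β) (hsym : IsSymmFn f) (hf : Integrable f)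
    {τ : Finset (Fin m)} {ℓ : Fin m} (hℓ : ℓ ∉ τ) (hτN : τ.card + 1 ≤ N) :
    ∀ᵐ Zm : Fin m → Dom,
      Integrable (fun z => Mβ β z.2 *
        ((-1 : ℝ) ^ (m - τ.card) * relMarg β N f τ (Function.update Zm ℓ z) +
          (-1 : ℝ) ^ (m - (insert ℓ τ).card) *
            relMarg β N f (insert ℓ τ) (Function.update Zm ℓ z))) ∧
      ∫ z, Mβ β z.2 *
        ((-1 : ℝ) ^ (m - τ.card) * relMarg β N f τ (Function.update Zm ℓ z) +
          (-1 : ℝ) ^ (m - (insert ℓ τ).card) *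
            relMarg β N f (insert ℓ τ) (Function.update Zm ℓ z)) = 0 := by
  filter_upwards [ae_integral_Mβ_mul_relMarg_insert hβ hsym hf hℓ hτN] with Zm ⟨hint, hval⟩
  have hτm : τ.card < m := by simpa using Finset.card_lt_univ_of_notMem hℓ
  set s : ℝ := (-1) ^ (m - (insert ℓ τ).card) with hs
  have hsign : (-1 : ℝ) ^ (m - τ.card) = -s := by
    rw [hs, Finset.card_insert_of_notMem hℓ, show m - τ.card = m - (τ.card + 1) + 1 by omega,
      pow_succ, mul_neg_one]
  have hsplit : ∀ z : Dom, Mβ β z.2 *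
      (-s * relMarg β N f τ (Function.update Zm ℓ z) +
        s * relMarg β N f (insert ℓ τ) (Function.update Zm ℓ z)) =
      -s * relMarg β N f τ Zm * Mβ β z.2 +
        s * (Mβ β z.2 * relMarg β N f (insert ℓ τ) (Function.update Zm ℓ z)) := fun z => by
    rw [relMarg_update_of_notMem hℓ]; ring
  simp only [hsign, hsplit]
  have hint₁ := (integrable_Mβ_snd hβ).const_mul (-s * relMarg β N f τ Zm)
  refine ⟨hint₁.add (hint.const_mul s), ?_⟩
  rw [integral_add hint₁ (hint.const_mul s), integral_const_mul, integral_const_mul,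
    integral_Mβ_snd hβ, hval]
  ring

end Cumulant

theorem statement2_general (β : ℝ) (hβ : 0 < β) (N : ℕ)
    (f : (Fin N → Dom) → ℝ) (hsym : IsSymmFn f) (hint : Integrable f)
    (hmean : ∫ Z : Fin N → Dom, f Z = 0) :
    ∀ m, 1 ≤ m → m ≤ N → ∀ ℓ : Fin m,
      ∀ᵐ Zm : Fin m → Dom,
        ∫ z : Dom, Mβ β z.2 * cumul β N f m (Function.update Zm ℓ z) = 0 := by
  intro m _ hmN ℓ
  have hpairs : ∀ τ ∈ (Finset.univ.erase ℓ).powerset, _ := fun τ hτ =>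
    have hℓ : ℓ ∉ τ := fun h => Finset.notMem_erase ℓ _ (Finset.mem_powerset.1 hτ h)
    ae_integral_Mβ_mul_relMarg_pair hβ hsym hint hℓ <| by
      have := Finset.card_le_univ (insert ℓ τ)
      rw [Finset.card_insert_of_notMem hℓ, Fintype.card_fin] at this
      omega
  filter_upwards [(Filter.eventually_all_finset _).2 hpairs] with Zm hZm
  simp only [cumul_eq_sum_powerset_erase hint hmean ℓ, Finset.mul_sum]
  rw [integral_finsetSum _ fun τ hτ => (hZm τ hτ).1]
  exact Finset.sum_eq_zero fun τ hτ => (hZm τ hτ).2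

/-- If `∫ f_N = 0` then each cumulant is mean-free in every variable:
for each `1 ≤ ℓ ≤ m`, `∫ g_N^m(Z_m) M_β(v_ℓ) dz_ℓ = 0`. -/
theorem statement2 (β : ℝ) (hβ : 0 < β) (N : ℕ) (hN : 1 ≤ N)
    (f : (Fin N → Dom) → ℝ) (hsym : IsSymmFn f) (hint : Integrable f)
    (hmean : ∫ Z : Fin N → Dom, f Z = 0) :
    ∀ m, 1 ≤ m → m ≤ N → ∀ ℓ : Fin m,
      ∀ᵐ Zm : Fin m → Dom,
        ∫ z : Dom, Mβ β z.2 * cumul β N f m (Function.update Zm ℓ z) = 0 :=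
  statement2_general β hβ N f hsym hint hmean
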